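/- arXiv:1704.01940 — 2 statements merged into one kernel-verified Lean document; each statement's English description precedes it below -/
import Mathlib

section
/- Let f : ℝ^d → ℝ^d be a 1-Lipschitz map and suppose there exists C > 0 such that for every x ∈ ℝ^d and every r > 0, the Lebesgue measure of f⁻¹(B(x,r)) is at most C·r^d. Then f is Lipschitz regular; more precisely, for every x ∈ ℝ^d and r > 0, the preimage f⁻¹(B(x,r)) can be covered by a number of balls of radius 2r that is bounded by a constant depending only on C and d. -/
open Metric MeasureTheory ENNReal

/-- A 1-Lipschitz map `f : ℝ^d → ℝ^d` whose preimages of balls of radius `r`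
have volume at most `C·r^d` is Lipschitz regular: preimages of balls of radius `r` can be
covered by a bounded number (depending only on `C` and `d`) of balls of radius `2r`. -/
theorem stmt1 (d : ℕ) (hd : 0 < d)
    (f : EuclideanSpace ℝ (Fin d) → EuclideanSpace ℝ (Fin d))
    (hf : LipschitzWith 1 f) (C : ℝ) (hC : 0 < C)
    (hvol : ∀ (x : EuclideanSpace ℝ (Fin d)) (r : ℝ), 0 < r →
      volume (f ⁻¹' ball x r) ≤ ENNReal.ofReal (C * r ^ d)) :
    ∃ K : ℕ, ∀ (x : EuclideanSpace ℝ (Fin d)) (r : ℝ), 0 < r →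
      ∃ T : Finset (EuclideanSpace ℝ (Fin d)), T.card ≤ K ∧
        f ⁻¹' ball x r ⊆ ⋃ c ∈ T, ball c (2 * r) := by
  classical
  haveI : Nonempty (Fin d) := ⟨⟨0, hd⟩⟩
  haveI : Nontrivial (EuclideanSpace ℝ (Fin d)) := by
    infer_instance
  set V : ℝ≥0∞ := volume (ball (0 : EuclideanSpace ℝ (Fin d)) 1) with hVdef
  have hV0 : V ≠ 0 := (measure_ball_pos _ _ one_pos).ne'
  have hVtop : V ≠ ⊤ := measure_ball_lt_top.ne
  set M : ℝ≥0∞ := ENNReal.ofReal (C * 4 ^ d) / V with hMdef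
  have hMtop : M ≠ ⊤ := by
    rw [hMdef]
    exact (ENNReal.div_lt_top ENNReal.ofReal_ne_top hV0).ne
  refine ⟨⌈M.toReal⌉₊, fun x r hr => ?_⟩
  have key : ∀ T : Finset (EuclideanSpace ℝ (Fin d)),
      ↑T ⊆ f ⁻¹' ball x r → (∀ a ∈ T, ∀ b ∈ T, a ≠ b → r ≤ dist a b) →
      T.card ≤ ⌈M.toReal⌉₊ := by
    intro T hTS hsep
    have hdisj : (T : Set (EuclideanSpace ℝ (Fin d))).PairwiseDisjoint
        (fun c => ball c (r / 2)) := by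
      intro a ha b hb hab
      refine ball_disjoint_ball ?_
      have := hsep a ha b hb hab
      linarith
    have hsub : ∀ c ∈ T, ball c (r / 2) ⊆ f ⁻¹' ball x (2 * r) := by
      intro c hc z hz
      have h1 : dist (f z) (f c) ≤ dist z c := by
        have := hf.dist_le_mul z c
        simpa using this
      have h2 : dist (f c) x < r := hTS hc
      have h3 : dist z c < r / 2 := hz
      have : dist (f z) x < 2 * r :=
        calc dist (f z) x ≤ dist (f z) (f c) + dist (f c) x := dist_triangle _ _ _
          _ < 2 * r := by linarith
      exact this
    have hmeas : ∑ c ∈ T, volume (ball c (r / 2)) ≤ ENNReal.ofReal (C * (2 * r) ^ d) := by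
      rw [← measure_biUnion_finset hdisj (fun c _ => measurableSet_ball)]
      exact le_trans (measure_mono (Set.iUnion₂_subset hsub)) (hvol x (2 * r) (by linarith))
    have hball : ∀ c : EuclideanSpace ℝ (Fin d), volume (ball c (r / 2)) =
        ENNReal.ofReal ((r / 2) ^ d) * V := by
      intro c
      rw [Measure.addHaar_ball volume c (by linarith : (0:ℝ) ≤ r / 2)]
      rw [finrank_euclideanSpace_fin]
    rw [Finset.sum_congr rfl (fun c _ => hball c), Finset.sum_const, nsmul_eq_mul] at hmeas
    have hofr : ENNReal.ofReal (C * (2 * r) ^ d)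
        = ENNReal.ofReal (C * 4 ^ d) * ENNReal.ofReal ((r / 2) ^ d) := by
      rw [← ENNReal.ofReal_mul (by positivity)]
      congr 1
      have h4 : (2 * r) ^ d = 4 ^ d * (r / 2) ^ d := by
        rw [← mul_pow]
        congr 1
        ring
      rw [h4]
      ring
    have ha0 : ENNReal.ofReal ((r / 2) ^ d) ≠ 0 := by
      simp only [ne_eq, ENNReal.ofReal_eq_zero, not_le]
      positivity
    have hatop : ENNReal.ofReal ((r / 2) ^ d) ≠ ⊤ := ENNReal.ofReal_ne_top
    rw [hofr] at hmeas
    have hmeas' : (T.card : ℝ≥0∞) * V * ENNReal.ofReal ((r / 2) ^ d)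
        ≤ ENNReal.ofReal (C * 4 ^ d) * ENNReal.ofReal ((r / 2) ^ d) := by
      calc (T.card : ℝ≥0∞) * V * ENNReal.ofReal ((r / 2) ^ d)
          = (T.card : ℝ≥0∞) * (ENNReal.ofReal ((r / 2) ^ d) * V) := by ring
        _ ≤ _ := hmeas
    have hcv : (T.card : ℝ≥0∞) * V ≤ ENNReal.ofReal (C * 4 ^ d) :=
      (ENNReal.mul_le_mul_iff_left ha0 hatop).mp hmeas'
    have hle : (T.card : ℝ≥0∞) ≤ M := by
      rw [hMdef]
      exact ENNReal.le_div_iff_mul_le (Or.inl hV0) (Or.inl hVtop) |>.mpr hcv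
    have hle2 : (T.card : ℝ) ≤ M.toReal := by
      have := ENNReal.toReal_mono hMtop hle
      simpa using this
    calc T.card = ⌈(T.card : ℝ)⌉₊ := by simp
      _ ≤ ⌈M.toReal⌉₊ := Nat.ceil_le_ceil hle2
  set P : ℕ → Prop := fun n => ∃ T : Finset (EuclideanSpace ℝ (Fin d)),
      T.card = n ∧ ↑T ⊆ f ⁻¹' ball x r ∧ ∀ a ∈ T, ∀ b ∈ T, a ≠ b → r ≤ dist a b with hPdef
  have hP0 : P 0 := ⟨∅, by simp, by simp, by simp⟩
  obtain ⟨T, hcard, hTS, hsep⟩ : P (Nat.findGreatest P ⌈M.toReal⌉₊) :=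
    Nat.findGreatest_spec (Nat.zero_le _) hP0
  refine ⟨T, by rw [hcard]; exact Nat.findGreatest_le _, ?_⟩
  intro y hy
  by_contra hcon
  simp only [Set.mem_iUnion, mem_ball, not_exists, not_lt, exists_prop, not_and] at hcon
  have hcon' : ∀ c ∈ T, 2 * r ≤ dist y c := fun c hc => hcon c hc
  have hyT : y ∉ T := by
    intro h
    have := hcon' y h
    rw [dist_self] at this
    linarith
  have hP' : P (Nat.findGreatest P ⌈M.toReal⌉₊ + 1) := by
    refine ⟨insert y T, ?_, ?_, ?_⟩
    · rw [Finset.card_insert_of_notMem hyT, hcard]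
    · intro z hz
      simp only [Finset.coe_insert, Set.mem_insert_iff] at hz
      rcases hz with rfl | hz
      · exact hy
      · exact hTS hz
    · intro a ha b hb hab
      simp only [Finset.mem_insert] at ha hb
      rcases ha with rfl | ha
      · rcases hb with rfl | hb
        · exact absurd rfl hab
        · have := hcon' b hb; linarith
      · rcases hb with rfl | hb
        · have := hcon' a ha; rw [dist_comm] at this; linarith
        · exact hsep a ha b hb hab
  obtain ⟨T', hcard', hTS', hsep'⟩ := hP'
  have hle' : Nat.findGreatest P ⌈M.toReal⌉₊ + 1 ≤ ⌈M.toReal⌉₊ := by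
    rw [← hcard']; exact key T' hTS' hsep'
  have hPn : P (Nat.findGreatest P ⌈M.toReal⌉₊ + 1) := ⟨T', hcard', hTS', hsep'⟩
  have := Nat.le_findGreatest hle' hPn
  omega
end

section
/- Let f : M → M' be a Lipschitz regular mapping between metric spaces and let d > 0. Then f satisfies Luzin's condition (N⁻¹) for d-dimensional Hausdorff measure: for every F ⊆ M' with ℋ^d(F) = 0, we have ℋ^d(f⁻¹(F)) = 0. -/
open Metric MeasureTheory ENNReal NNReal

lemma aux_finset_range {M : Type*} [Nonempty M] (C : ℕ) (T : Finset M) (hT : T.card ≤ C) :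
    ∃ g : Fin C → M, (T : Set M) ⊆ Set.range g := by
  classical
  refine ⟨fun j => T.toList.getD j (Classical.arbitrary M), ?_⟩
  intro c hc
  have hc' : c ∈ T.toList := by simpa using hc
  obtain ⟨i, hi, hget⟩ := List.getElem_of_mem hc'
  have hlen : T.toList.length = T.card := Finset.length_toList T
  refine ⟨⟨i, lt_of_lt_of_le (hlen ▸ hi) hT⟩, ?_⟩
  simp only
  rw [List.getD_eq_getElem _ _ (show i < T.toList.length by omega)]
  exact hget

lemma aux_add_rpow (a b : ℝ≥0∞) {d : ℝ} (hd : 0 < d) :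
    (a + b) ^ d ≤ 2 ^ d * (a ^ d + b ^ d) := by
  have h1 : a + b ≤ 2 * (a ⊔ b) := by
    rw [two_mul]; exact add_le_add le_sup_left le_sup_right
  calc (a + b) ^ d ≤ (2 * (a ⊔ b)) ^ d := ENNReal.rpow_le_rpow h1 hd.le
    _ = 2 ^ d * (a ⊔ b) ^ d := ENNReal.mul_rpow_of_nonneg _ _ hd.le
    _ ≤ 2 ^ d * (a ^ d + b ^ d) := by
        gcongr
        rcases le_total a b with h | h
        · rw [sup_eq_right.2 h]; exact le_add_self
        · rw [sup_eq_left.2 h]; exact le_add_right le_rfl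

lemma aux_cover {M M' : Type*} [MetricSpace M] [MetricSpace M'] [MeasurableSpace M'] [BorelSpace M'] [Nonempty M]
    (f : M → M') (C : ℕ)
    (hreg : ∀ r : ℝ, 0 < r → ∀ y : M', ∃ T : Finset M, T.card ≤ C ∧
      f ⁻¹' ball y r ⊆ ⋃ c ∈ T, ball c (C * r))
    (d : ℝ) (hd : 0 < d) (F : Set M') (h0 : μH[d] F = 0)
    (δ : ℝ) (hδ : 0 < δ) (ε : ℝ≥0) (hε : 0 < ε) :
    ∃ u : ℕ × Fin C → Set M, (f ⁻¹' F ⊆ ⋃ i, u i) ∧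
      (∀ i, EMetric.diam (u i) ≤ (6 * C : ℝ≥0∞) * ENNReal.ofReal δ) ∧
      ∑' i, EMetric.diam (u i) ^ d ≤
        (C : ℝ≥0∞) * (2 * C) ^ d * 2 ^ d * (2 ^ d + 2) * ε := by
  classical
  have : Nonempty M' := ⟨f (Classical.arbitrary M)⟩
  -- extract a fine cover of F with small total mass
  rw [Measure.hausdorffMeasure_apply] at h0
  have hinf : (⨅ (t : ℕ → Set M') (_ : F ⊆ ⋃ n, t n)
      (_ : ∀ n, EMetric.diam (t n) ≤ ENNReal.ofReal δ),
      ∑' n, ⨆ _ : (t n).Nonempty, EMetric.diam (t n) ^ d) < (ε : ℝ≥0∞) := by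
    refine lt_of_le_of_lt ?_ (show (0 : ℝ≥0∞) < ε by exact_mod_cast hε)
    refine le_of_le_of_eq ?_ h0
    exact le_iSup₂ (f := fun (r : ℝ≥0∞) (_ : 0 < r) =>
      ⨅ (t : ℕ → Set M') (_ : F ⊆ ⋃ n, t n) (_ : ∀ n, EMetric.diam (t n) ≤ r),
        ∑' n, ⨆ _ : (t n).Nonempty, EMetric.diam (t n) ^ d)
      (ENNReal.ofReal δ) (ENNReal.ofReal_pos.2 hδ)
  simp only [iInf_lt_iff] at hinf
  obtain ⟨t, htF, htd, hts⟩ := hinf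
  set D : ℕ → ℝ≥0∞ := fun n => EMetric.diam (t n) with hD
  have hDle : ∀ n, D n ≤ ENNReal.ofReal δ := htd
  have hDtop : ∀ n, D n ≠ ∞ := fun n => ((hDle n).trans_lt ENNReal.ofReal_lt_top).ne
  -- auxiliary small radii
  set σ : ℕ → ℝ≥0∞ := fun n => min (ENNReal.ofReal δ) (((ε : ℝ≥0∞) * 2⁻¹ ^ n) ^ (1 / d)) with hσ
  have hσpos : ∀ n, 0 < σ n := by
    intro n
    refine lt_min (ENNReal.ofReal_pos.2 hδ) (ENNReal.rpow_pos ?_ ?_)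
    · exact ENNReal.mul_pos (by exact_mod_cast hε.ne') (pow_ne_zero n (by simp))
    · exact ENNReal.mul_ne_top ENNReal.coe_ne_top (by
        exact pow_ne_top (by simp))
  have hσle : ∀ n, σ n ≤ ENNReal.ofReal δ := fun n => min_le_left _ _
  have hσtop : ∀ n, σ n ≠ ∞ := fun n => ((hσle n).trans_lt ENNReal.ofReal_lt_top).ne
  have hσd : ∀ n, σ n ^ d ≤ (ε : ℝ≥0∞) * 2⁻¹ ^ n := by
    intro n
    calc σ n ^ d ≤ (((ε : ℝ≥0∞) * 2⁻¹ ^ n) ^ (1 / d)) ^ d :=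
          ENNReal.rpow_le_rpow (min_le_right _ _) hd.le
      _ = (ε : ℝ≥0∞) * 2⁻¹ ^ n := by
          rw [← ENNReal.rpow_mul, one_div, inv_mul_cancel₀ hd.ne', ENNReal.rpow_one]
  -- centers
  have hy : ∀ n, ∃ y : M', (t n).Nonempty → y ∈ t n := by
    intro n
    by_cases h : (t n).Nonempty
    · exact ⟨h.choose, fun _ => h.choose_spec⟩
    · exact ⟨Classical.arbitrary M', fun h' => absurd h' h⟩
  choose y hy using hy
  -- radii
  set ρ : ℕ → ℝ := fun n => (2 * D n + σ n).toReal with hρ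
  have hne : ∀ n, 2 * D n + σ n ≠ ∞ := fun n =>
    ENNReal.add_ne_top.2 ⟨ENNReal.mul_ne_top (by simp) (hDtop n), hσtop n⟩
  have hρpos : ∀ n, 0 < ρ n := by
    intro n
    exact ENNReal.toReal_pos (by
      intro h
      exact (hσpos n).ne' (by simpa using (add_eq_zero.mp h).2)) (hne n)
  have hρof : ∀ n, ENNReal.ofReal (ρ n) = 2 * D n + σ n := fun n =>
    ENNReal.ofReal_toReal (hne n)
  -- t n ⊆ ball (y n) (ρ n)
  have hsub : ∀ n, t n ⊆ ball (y n) (ρ n) := by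
    intro n x hx
    have h1 : edist x (y n) ≤ D n := EMetric.edist_le_diam_of_mem hx (hy n ⟨x, hx⟩)
    have h2 : D n < 2 * D n + σ n := by
      have : D n < D n + (D n + σ n) :=
        ENNReal.lt_add_right (hDtop n) (fun h => (hσpos n).ne' (by simpa using (add_eq_zero.mp h).2))
      calc D n < D n + (D n + σ n) := this
        _ = 2 * D n + σ n := by ring
    have := h1.trans_lt h2
    rw [← hρof n] at this
    exact Metric.mem_ball.2 (edist_lt_ofReal.mp this)
  -- regularity covers
  choose T hTcard hTsub using fun n => hreg (ρ n) (hρpos n) (y n)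
  choose g hg using fun n => aux_finset_range C (T n) (hTcard n)
  refine ⟨fun i => ball (g i.1 i.2) (C * ρ i.1), ?_, ?_, ?_⟩
  · -- coverage
    intro x hx
    obtain ⟨n, hn⟩ := Set.mem_iUnion.mp (htF hx)
    have hxb : x ∈ f ⁻¹' ball (y n) (ρ n) := hsub n hn
    obtain ⟨c, hcT, hxc⟩ := Set.mem_iUnion₂.mp (hTsub n hxb)
    obtain ⟨j, hj⟩ := hg n hcT
    exact Set.mem_iUnion.2 ⟨(n, j), by rw [hj]; exact hxc⟩
  · -- diameter bound
    rintro ⟨n, j⟩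
    have h1 : EMetric.diam (ball (g n j) (C * ρ n)) ≤ 2 * ENNReal.ofReal (C * ρ n) := by
      rw [← Metric.emetric_ball]
      exact EMetric.diam_ball
    have h2 : ENNReal.ofReal ((C : ℝ) * ρ n) = (C : ℝ≥0∞) * (2 * D n + σ n) := by
      rw [ENNReal.ofReal_mul (by positivity), hρof n, ENNReal.ofReal_natCast]
    refine h1.trans ?_
    rw [h2]
    calc 2 * ((C : ℝ≥0∞) * (2 * D n + σ n))
        ≤ 2 * ((C : ℝ≥0∞) * (2 * ENNReal.ofReal δ + ENNReal.ofReal δ)) := by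
          gcongr
          exacts [hDle n, hσle n]
      _ = (6 * C : ℝ≥0∞) * ENNReal.ofReal δ := by ring
  · -- sum bound
    change ∑' (i : ℕ × Fin C), EMetric.diam (ball (g i.1 i.2) ((C : ℝ) * ρ i.1)) ^ d ≤ _
    rw [ENNReal.tsum_prod
      (f := fun (n : ℕ) (j : Fin C) => EMetric.diam (ball (g n j) ((C : ℝ) * ρ n)) ^ d)]
    have hterm : ∀ n (j : Fin C), EMetric.diam (ball (g n j) (C * ρ n)) ^ d ≤
        (2 * C : ℝ≥0∞) ^ d * 2 ^ d * ((2 ^ d * D n ^ d) + σ n ^ d) := by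
      intro n j
      have h1 : EMetric.diam (ball (g n j) (C * ρ n)) ≤ (2 * C : ℝ≥0∞) * (2 * D n + σ n) := by
        rw [← Metric.emetric_ball]
        refine EMetric.diam_ball.trans ?_
        rw [ENNReal.ofReal_mul (by positivity), hρof n, ENNReal.ofReal_natCast, ← mul_assoc]
      calc EMetric.diam (ball (g n j) (C * ρ n)) ^ d
          ≤ ((2 * C : ℝ≥0∞) * (2 * D n + σ n)) ^ d := ENNReal.rpow_le_rpow h1 hd.le
        _ = (2 * C : ℝ≥0∞) ^ d * (2 * D n + σ n) ^ d := ENNReal.mul_rpow_of_nonneg _ _ hd.le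
        _ ≤ (2 * C : ℝ≥0∞) ^ d * (2 ^ d * ((2 * D n) ^ d + σ n ^ d)) := by
            gcongr
            exact aux_add_rpow _ _ hd
        _ = (2 * C : ℝ≥0∞) ^ d * 2 ^ d * ((2 ^ d * D n ^ d) + σ n ^ d) := by
            rw [ENNReal.mul_rpow_of_nonneg 2 (D n) hd.le]; ring
    have hrow : ∀ n, ∑' j : Fin C, EMetric.diam (ball (g n j) (C * ρ n)) ^ d ≤
        (C : ℝ≥0∞) * ((2 * C : ℝ≥0∞) ^ d * 2 ^ d * ((2 ^ d * D n ^ d) + σ n ^ d)) := by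
      intro n
      rw [tsum_fintype]
      calc ∑ j : Fin C, EMetric.diam (ball (g n j) (C * ρ n)) ^ d
          ≤ ∑ _j : Fin C, (2 * C : ℝ≥0∞) ^ d * 2 ^ d * ((2 ^ d * D n ^ d) + σ n ^ d) :=
            Finset.sum_le_sum fun j _ => hterm n j
        _ = (C : ℝ≥0∞) * ((2 * C : ℝ≥0∞) ^ d * 2 ^ d * ((2 ^ d * D n ^ d) + σ n ^ d)) := by
            rw [Finset.sum_const, Finset.card_univ, Fintype.card_fin, nsmul_eq_mul]
    have hDsum : ∑' n, D n ^ d ≤ (ε : ℝ≥0∞) := by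
      refine le_trans (ENNReal.tsum_le_tsum fun n => ?_) hts.le
      by_cases h : (t n).Nonempty
      · rw [iSup_pos h]
      · have : D n = 0 := by
          rw [hD]; simp [Set.not_nonempty_iff_eq_empty.mp h]; exact Metric.ediam_empty
        rw [this, ENNReal.zero_rpow_of_pos hd]
        exact zero_le
    have hσsum : ∑' n, σ n ^ d ≤ 2 * (ε : ℝ≥0∞) := by
      refine le_trans (ENNReal.tsum_le_tsum hσd) ?_
      rw [ENNReal.tsum_mul_left, ENNReal.tsum_geometric]
      rw [mul_comm]
      gcongr
      simp [ENNReal.one_sub_inv_two]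
    calc ∑' n, ∑' j : Fin C, EMetric.diam (ball (g n j) (C * ρ n)) ^ d
        ≤ ∑' n, (C : ℝ≥0∞) * ((2 * C : ℝ≥0∞) ^ d * 2 ^ d * ((2 ^ d * D n ^ d) + σ n ^ d)) :=
          ENNReal.tsum_le_tsum hrow
      _ = ∑' n, ((C : ℝ≥0∞) * ((2 * C : ℝ≥0∞) ^ d * 2 ^ d)) * ((2 ^ d * D n ^ d) + σ n ^ d) :=
          tsum_congr fun n => by ring
      _ = ((C : ℝ≥0∞) * ((2 * C : ℝ≥0∞) ^ d * 2 ^ d)) * ∑' n, ((2 ^ d * D n ^ d) + σ n ^ d) :=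
          ENNReal.tsum_mul_left
      _ = ((C : ℝ≥0∞) * ((2 * C : ℝ≥0∞) ^ d * 2 ^ d)) * (2 ^ d * ∑' n, D n ^ d + ∑' n, σ n ^ d) := by
          rw [ENNReal.tsum_add, ENNReal.tsum_mul_left]
      _ ≤ ((C : ℝ≥0∞) * ((2 * C : ℝ≥0∞) ^ d * 2 ^ d)) * (2 ^ d * ε + 2 * ε) := by
          gcongr
      _ = (C : ℝ≥0∞) * (2 * C) ^ d * 2 ^ d * (2 ^ d + 2) * ε := by ring


/-- A Lipschitz regular map satisfies Luzin's condition (N⁻¹) for the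
`d`-dimensional Hausdorff measure: null sets have null preimages. -/
theorem stmt6 {M M' : Type*} [MetricSpace M] [MeasurableSpace M] [BorelSpace M]
    [MetricSpace M'] [MeasurableSpace M'] [BorelSpace M']
    (f : M → M') (L : NNReal) (hf : LipschitzWith L f)
    (C : ℕ)
    (hreg : ∀ r : ℝ, 0 < r → ∀ y : M', ∃ T : Finset M, T.card ≤ C ∧
      f ⁻¹' ball y r ⊆ ⋃ c ∈ T, ball c (C * r))
    (d : ℝ) (hd : 0 < d) :
    ∀ F : Set M', μH[d] F = 0 → μH[d] (f ⁻¹' F) = 0 := by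
  intro F h0
  rcases isEmpty_or_nonempty M with hM | hM
  · have : f ⁻¹' F = ∅ := Set.eq_empty_of_isEmpty _
    simp [this]
  set K : ℝ≥0∞ := (C : ℝ≥0∞) * (2 * C) ^ d * 2 ^ d * (2 ^ d + 2) with hK
  have hKtop : K ≠ ∞ := by
    rw [hK]
    refine ENNReal.mul_ne_top (ENNReal.mul_ne_top (ENNReal.mul_ne_top ?_ ?_) ?_) ?_
    · exact ENNReal.natCast_ne_top C
    · exact (ENNReal.rpow_lt_top_of_nonneg hd.le (by
        exact ENNReal.mul_ne_top (by simp) (ENNReal.natCast_ne_top C))).ne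
    · exact (ENNReal.rpow_lt_top_of_nonneg hd.le (by simp)).ne
    · exact ENNReal.add_ne_top.2 ⟨(ENNReal.rpow_lt_top_of_nonneg hd.le (by simp)).ne, by simp⟩
  suffices h : ∀ ε : ℝ≥0, 0 < ε → μH[d] (f ⁻¹' F) ≤ K * ε by
    by_contra hne
    obtain ⟨c, hc0, hclt⟩ := ENNReal.exists_nnreal_pos_mul_lt hKtop hne
    exact hclt.not_ge ((h c hc0).trans_eq (mul_comm K c))
  intro ε hε
  have key := fun k : ℕ => aux_cover f C hreg d hd F h0 (1 / (k + 1))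
    (by positivity) ε hε
  choose u hu₁ hu₂ hu₃ using key
  have hlim : μH[d] (f ⁻¹' F) ≤
      Filter.liminf (fun k => ∑' i : ℕ × Fin C, EMetric.diam (u k i) ^ d) Filter.atTop := by
    refine Measure.hausdorffMeasure_le_liminf_tsum (β := ℕ) (ι := fun _ => ℕ × Fin C) (l := Filter.atTop) d _ (fun k => (6 * C : ℝ≥0∞) *
      ENNReal.ofReal (1 / (k + 1))) ?_ u ?_ ?_
    · have h1 : Filter.Tendsto (fun k : ℕ => ENNReal.ofReal (1 / (k + 1)))
          Filter.atTop (nhds 0) := by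
        rw [← ENNReal.ofReal_zero]
        exact ENNReal.tendsto_ofReal tendsto_one_div_add_atTop_nhds_zero_nat
      have h6 : (6 * (C : ℝ≥0∞)) ≠ ⊤ :=
        ENNReal.mul_ne_top (by norm_num) (ENNReal.natCast_ne_top C)
      have := ENNReal.Tendsto.const_mul (a := 6 * (C : ℝ≥0∞)) h1 (Or.inr h6)
      simpa using this
    · exact Filter.Eventually.of_forall hu₂
    · exact Filter.Eventually.of_forall hu₁
  refine hlim.trans ?_
  refine le_trans (Filter.liminf_le_of_frequently_le
    (Filter.Frequently.of_forall hu₃)) le_rfl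
end
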